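/- arXiv:0910.2141 — 4 statements merged into one kernel-verified Lean document; each statement's English description precedes it below -/
import Mathlib

section
/- Fix S ∈ ℝ and times t, t' with t + t' > 0, and let f = −(S/3)·(t² + t·t' + t'²)/(t + t'), with θ ∈ (0, π/2) defined by tan θ = f + √(1 + f²). Set a₁ = 1 − (S/2)(t + t')·tan θ and a₂ = 1 + (S/2)(t + t')·cot θ. Then a₁ + a₂ = 2 + (S²/3)(t² + t·t' + t'²), a₁·a₂ = 1 + (S²/12)(t − t')², and both a₁ > 0 and a₂ > 0. -/
/-!
With `s = √(1 + f²)` one has `(f + s)(s - f) = 1`, so `tan θ = f + s` and `cot θ = s - f`.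
Writing `k = (S/2)(t + t')`, the two scale factors are `1 - k(f + s)` and `1 + k(s - f)`:
their sum is `2 - 2kf` and their product is `1 - 2kf - k²`, and the definition of `f` turns
these into the two stated polynomials. Both polynomials are positive, and two reals with
positive sum and positive product are positive.
-/

lemma pos_and_pos_of_add_pos_of_mul_pos {α : Type*} [Ring α] [LinearOrder α]
    [IsStrictOrderedRing α] {a b : α} (hab : 0 < a + b) (h : 0 < a * b) : 0 < a ∧ 0 < b :=
  (pos_and_pos_or_neg_and_neg_of_mul_pos h).resolve_right fun ⟨ha, hb⟩ =>
    (add_neg ha hb).not_gt hab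

lemma Real.inv_add_sqrt_one_add_sq (f : ℝ) : (f + √(1 + f ^ 2))⁻¹ = √(1 + f ^ 2) - f := by
  refine inv_eq_of_mul_eq_one_right ?_
  have hs : √(1 + f ^ 2) ^ 2 = 1 + f ^ 2 := Real.sq_sqrt (by positivity)
  linear_combination hs

lemma Real.cos_div_sin_eq_inv_tan (θ : ℝ) : Real.cos θ / Real.sin θ = (Real.tan θ)⁻¹ := by
  rw [Real.tan_eq_sin_div_cos, inv_div]

lemma sq_add_mul_add_sq_nonneg {α : Type*} [CommRing α] [LinearOrder α] [IsStrictOrderedRing α]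
    (a b : α) : 0 ≤ a ^ 2 + a * b + b ^ 2 := by
  nlinarith [sq_nonneg (a + b), sq_nonneg a, sq_nonneg b]

theorem principal_axis_scale_factors_sum_product_pos_general
    (S t t' : ℝ) (htt : 0 < t + t')
    (f θ : ℝ) (hf : f = -(S / 3) * (t ^ 2 + t * t' + t' ^ 2) / (t + t'))
    (htan : Real.tan θ = f + Real.sqrt (1 + f ^ 2)) :
    (1 - S / 2 * (t + t') * Real.tan θ)
      + (1 + S / 2 * (t + t') * (Real.cos θ / Real.sin θ))
      = 2 + S ^ 2 / 3 * (t ^ 2 + t * t' + t' ^ 2) ∧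
    (1 - S / 2 * (t + t') * Real.tan θ)
      * (1 + S / 2 * (t + t') * (Real.cos θ / Real.sin θ))
      = 1 + S ^ 2 / 12 * (t - t') ^ 2 ∧
    0 < 1 - S / 2 * (t + t') * Real.tan θ ∧
    0 < 1 + S / 2 * (t + t') * (Real.cos θ / Real.sin θ) := by
  rw [Real.cos_div_sin_eq_inv_tan, htan, Real.inv_add_sqrt_one_add_sq]
  have hs : √(1 + f ^ 2) ^ 2 = 1 + f ^ 2 := Real.sq_sqrt (by positivity)
  have hft : f * (t + t') = -(S / 3) * (t ^ 2 + t * t' + t' ^ 2) := by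
    rw [hf, div_mul_cancel₀ _ htt.ne']
  have hsum : (1 - S / 2 * (t + t') * (f + √(1 + f ^ 2)))
      + (1 + S / 2 * (t + t') * (√(1 + f ^ 2) - f))
      = 2 + S ^ 2 / 3 * (t ^ 2 + t * t' + t' ^ 2) := by
    linear_combination (-S) * hft
  have hprod : (1 - S / 2 * (t + t') * (f + √(1 + f ^ 2)))
      * (1 + S / 2 * (t + t') * (√(1 + f ^ 2) - f)) = 1 + S ^ 2 / 12 * (t - t') ^ 2 := by
    linear_combination (-(S / 2 * (t + t')) ^ 2) * hs + (-S) * hft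
  have hq := sq_add_mul_add_sq_nonneg t t'
  exact ⟨hsum, hprod,
    pos_and_pos_of_add_pos_of_mul_pos (hsum ▸ by positivity) (hprod ▸ by positivity)⟩

theorem principal_axis_scale_factors_sum_product_pos
    (S t t' : ℝ) (htt : 0 < t + t')
    (f θ : ℝ) (hf : f = -(S / 3) * (t ^ 2 + t * t' + t' ^ 2) / (t + t'))
    (hθ0 : 0 < θ) (hθπ : θ < Real.pi / 2)
    (htan : Real.tan θ = f + Real.sqrt (1 + f ^ 2)) :
    (1 - S / 2 * (t + t') * Real.tan θ)
      + (1 + S / 2 * (t + t') * (Real.cos θ / Real.sin θ))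
      = 2 + S ^ 2 / 3 * (t ^ 2 + t * t' + t' ^ 2) ∧
    (1 - S / 2 * (t + t') * Real.tan θ)
      * (1 + S / 2 * (t + t') * (Real.cos θ / Real.sin θ))
      = 1 + S ^ 2 / 12 * (t - t') ^ 2 ∧
    0 < 1 - S / 2 * (t + t') * Real.tan θ ∧
    0 < 1 + S / 2 * (t + t') * (Real.cos θ / Real.sin θ) :=
  principal_axis_scale_factors_sum_product_pos_general S t t' htt f θ hf htan
end

section
/- Fix S ≤ 0 and times t ≥ t' ≥ 0 with t + t' > 0, let f = −(S/3)·(t² + t·t' + t'²)/(t + t'), and let θ ∈ (0, π/2) satisfy tan θ = f + √(1 + f²). Then f ≥ 0, tan θ ≥ 1 (so θ ∈ [π/4, π/2)), σ₁² = 1 − (S/2)(t + t')·tan θ ≥ 1, and 0 < σ₂² = 1 + (S/2)(t + t')·cot θ ≤ 1. -/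
/-!
Put `a = -(S/2)(t + t') ≥ 0`. Since `t² + t t' + t'² ≥ 3(t + t')²/4`, the coefficient `f` satisfies
`a ≤ 2f`, while `√(1 + f²) > f` gives `tan θ > 2f ≥ a`. Hence `a · cot θ ∈ [0, 1)`, which bounds
`σ₂² = 1 - a cot θ`, and `σ₁² = 1 + a tan θ ≥ 1` is immediate from `tan θ ≥ 1 > 0`.
-/

open Real

lemma two_mul_lt_add_sqrt_one_add_sq (f : ℝ) : 2 * f < f + √(1 + f ^ 2) := by
  have : f < √(1 + f ^ 2) := by
    rcases le_or_gt 0 f with hf | hf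
    · exact (lt_sqrt hf).2 (by linarith)
    · exact hf.trans_le (sqrt_nonneg _)
  linarith

lemma one_le_add_sqrt_one_add_sq {f : ℝ} (hf : 0 ≤ f) : 1 ≤ f + √(1 + f ^ 2) := by
  have : 1 ≤ √(1 + f ^ 2) := one_le_sqrt.2 (by nlinarith)
  linarith

section Shear

variable {S t t' : ℝ}

lemma shear_coeff_nonneg (hS : S ≤ 0) (htt : 0 ≤ t + t') :
    0 ≤ -(S / 3) * (t ^ 2 + t * t' + t' ^ 2) / (t + t') := by
  have hQ : 0 ≤ t ^ 2 + t * t' + t' ^ 2 := by nlinarith [sq_nonneg (t + t'), sq_nonneg t, sq_nonneg t']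
  exact div_nonneg (mul_nonneg (by linarith) hQ) htt

lemma neg_half_shear_le_two_mul_shear_coeff (hS : S ≤ 0) (htt : 0 < t + t') :
    -(S / 2 * (t + t')) ≤ 2 * (-(S / 3) * (t ^ 2 + t * t' + t' ^ 2) / (t + t')) := by
  rw [mul_div_assoc', le_div_iff₀ htt]
  -- the difference of the two sides is `-S (t - t')² / 6`
  nlinarith [mul_nonneg (neg_nonneg.2 hS) (sq_nonneg (t - t'))]

end Shear

lemma pi_div_four_le_of_one_le_tan {θ : ℝ} (h₀ : -(π / 2) < θ) (h₁ : θ < π / 2)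
    (h : 1 ≤ tan θ) : π / 4 ≤ θ := by
  by_contra! hlt
  have := tan_lt_tan_of_lt_of_lt_pi_div_two h₀ (by linarith [pi_pos]) hlt
  rw [tan_pi_div_four] at this
  linarith

lemma one_add_mul_cos_div_sin_mem_Ioc {b θ : ℝ} (hb : b ≤ 0) (h : -b < tan θ) :
    1 + b * (cos θ / sin θ) ∈ Set.Ioc 0 1 := by
  have hT : 0 < tan θ := by linarith
  rw [← inv_div, ← tan_eq_sin_div_cos]
  have hlt : -b / tan θ < 1 := (div_lt_one hT).2 h
  have hnonneg : 0 ≤ -b / tan θ := div_nonneg (by linarith) hT.le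
  have heq : b * (tan θ)⁻¹ = -(-b / tan θ) := by ring
  constructor <;> linarith

theorem negative_shear_scale_factor_bounds_general
    (S t t' : ℝ) (hS : S ≤ 0) (htt : 0 < t + t')
    (f θ : ℝ) (hf : f = -(S / 3) * (t ^ 2 + t * t' + t' ^ 2) / (t + t'))
    (hθ0 : 0 < θ) (hθπ : θ < Real.pi / 2)
    (htan : Real.tan θ = f + Real.sqrt (1 + f ^ 2)) :
    0 ≤ f ∧
    1 ≤ Real.tan θ ∧
    Real.pi / 4 ≤ θ ∧
    1 ≤ 1 - S / 2 * (t + t') * Real.tan θ ∧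
    0 < 1 + S / 2 * (t + t') * (Real.cos θ / Real.sin θ) ∧
    1 + S / 2 * (t + t') * (Real.cos θ / Real.sin θ) ≤ 1 := by
  have hf0 : 0 ≤ f := hf ▸ shear_coeff_nonneg hS htt.le
  have htan1 : 1 ≤ tan θ := htan ▸ one_le_add_sqrt_one_add_sq hf0
  have hb : S / 2 * (t + t') ≤ 0 := mul_nonpos_of_nonpos_of_nonneg (by linarith) htt.le
  have hshear : -(S / 2 * (t + t')) < tan θ :=
    htan ▸ (hf ▸ neg_half_shear_le_two_mul_shear_coeff hS htt).trans_lt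
      (two_mul_lt_add_sqrt_one_add_sq f)
  obtain ⟨hσ₂pos, hσ₂le⟩ := one_add_mul_cos_div_sin_mem_Ioc hb hshear
  refine ⟨hf0, htan1, pi_div_four_le_of_one_le_tan (by linarith [pi_pos]) hθπ htan1, ?_,
    hσ₂pos, hσ₂le⟩
  nlinarith

theorem negative_shear_scale_factor_bounds
    (S t t' : ℝ) (hS : S ≤ 0) (ht' : 0 ≤ t') (ht : t' ≤ t) (htt : 0 < t + t')
    (f θ : ℝ) (hf : f = -(S / 3) * (t ^ 2 + t * t' + t' ^ 2) / (t + t'))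
    (hθ0 : 0 < θ) (hθπ : θ < Real.pi / 2)
    (htan : Real.tan θ = f + Real.sqrt (1 + f ^ 2)) :
    0 ≤ f ∧
    1 ≤ Real.tan θ ∧
    Real.pi / 4 ≤ θ ∧
    1 ≤ 1 - S / 2 * (t + t') * Real.tan θ ∧
    0 < 1 + S / 2 * (t + t') * (Real.cos θ / Real.sin θ) ∧
    1 + S / 2 * (t + t') * (Real.cos θ / Real.sin θ) ≤ 1 :=
  negative_shear_scale_factor_bounds_general S t t' hS htt f θ hf hθ0 hθπ htan
end

section
/- Fix η > 0, S ∈ ℝ, and times t > t' ≥ 0. Then for every x ∈ ℝ³: (2π)^{−3} ∫_{ℝ³} exp( i k·x − η(t − t')·( |k|² − S(t + t')k₁k₂ + (S²/3)(t² + t·t' + t'²)k₂² ) ) d³k = G_η(x,t,t'), i.e. the inverse Fourier transform of the Fourier-space resistive Green's function equals the sheared heat kernel. -/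
/-!
With `a = η (t - t')`, `b = S (t + t')`, `p = S² (t² + t t' + t'²) / 3`, the substitution
`k₀ = u₀ + (b/2) u₁` is a transvection, hence volume preserving, and turns the `k`-space form into
`u₀² + D u₁² + u₂²` with `D = 1 + p - b²/4 = 1 + S² (t - t')² / 12`. The integral then factors
into three one-dimensional Gaussians, i.e. a product of 1D heat kernels in
`(x₀, x₁ + (b/2) x₀, x₂)`. The resulting `x`-space form `x₀² + (x₁ + (b/2) x₀)² / D` is the
inverse of `[[1, -b/2], [-b/2, 1 + p]]`. The equation for `tan θ` implies `tan² θ - 2 f tan θ = 1`,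
i.e. that `(cos θ, sin θ)` is an eigenvector of this matrix; its eigenvalues are `σ₁², σ₂²`
(so `σ₁² σ₂² = D`), and rotating by `θ` diagonalizes the form.
-/

open MeasureTheory Matrix Real
open scoped Complex

theorem integral_comp_transvectionStruct {ι E : Type*} [Fintype ι] [DecidableEq ι]
    [NormedAddCommGroup E] [NormedSpace ℝ E] (t : TransvectionStruct ι ℝ) (g : (ι → ℝ) → E) :
    ∫ u, g (t.toMatrix *ᵥ u) = ∫ k, g k := by
  have hinj : Function.Injective (toLin' t.toMatrix) :=
    Function.LeftInverse.injective (g := toLin' t.inv.toMatrix) fun u => by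
      simp [mulVec_mulVec, t.inv_mul]
  exact (Real.volume_preserving_transvectionStruct t).integral_comp
    (LinearMap.isClosedEmbedding_of_injective (LinearMap.ker_eq_bot.2 hinj)).measurableEmbedding g

theorem transvection_zero_one_mulVec (c : ℝ) (u : Fin 3 → ℝ) :
    (TransvectionStruct.toMatrix ⟨0, 1, by decide, c⟩ : Matrix (Fin 3) (Fin 3) ℝ) *ᵥ u
      = ![u 0 + c * u 1, u 1, u 2] := by
  ext i
  fin_cases i <;> simp [TransvectionStruct.toMatrix, transvection, mulVec, dotProduct,
    Fin.sum_univ_three, single]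

noncomputable def heatKernel (β y : ℝ) : ℝ :=
  (4 * π * β) ^ (-(1 : ℝ) / 2) * Real.exp (-(y ^ 2 / (4 * β)))

theorem inv_two_pi_mul_gaussian_fourier_eq_heatKernel {β : ℝ} (hβ : 0 < β) (y : ℝ) :
    ((2 * π : ℝ) : ℂ)⁻¹ * ((π / (β : ℂ)) ^ (1 / 2 : ℂ) * cexp ((Complex.I * y) ^ 2 / (4 * β)))
      = heatKernel β y := by
  have hprefactor : (4 * π * β) ^ (-(1 : ℝ) / 2) = (2 * π)⁻¹ * (π / β) ^ (1 / 2 : ℝ) := by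
    rw [neg_div, rpow_neg (by positivity), ← sqrt_eq_rpow, ← sqrt_eq_rpow,
      sqrt_div pi_pos.le, show 4 * π * β = 2 ^ 2 * π * β by ring, sqrt_mul (by positivity),
      sqrt_mul (by positivity), sqrt_sq zero_le_two]
    have := sqrt_pos.2 pi_pos
    have := sqrt_pos.2 hβ
    field_simp
    exact (sq_sqrt pi_pos.le).symm
  rw [heatKernel, hprefactor, show (π / (β : ℂ)) = ((π / β : ℝ) : ℂ) by push_cast; rfl,
    show (1 / 2 : ℂ) = ((1 / 2 : ℝ) : ℂ) by push_cast; rfl,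
    ← Complex.ofReal_cpow (by positivity), mul_pow, Complex.I_sq]
  push_cast
  ring_nf

theorem inv_two_pi_pow_mul_integral_cexp_neg_sum_mul_add {ι : Type*} [Fintype ι] {β : ι → ℝ}
    (hβ : ∀ i, 0 < β i) (y : ι → ℝ) :
    ((2 * π : ℝ) : ℂ)⁻¹ ^ Fintype.card ι *
        ∫ u : ι → ℝ, cexp (-∑ i, (β i : ℂ) * (u i : ℂ) ^ 2 + ∑ i, Complex.I * y i * u i)
      = (∏ i, heatKernel (β i) (y i) : ℝ) := by
  rw [GaussianFourier.integral_cexp_neg_sum_mul_add (fun i => by simpa using hβ i),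
    ← Finset.card_univ, ← Finset.prod_const, ← Finset.prod_mul_distrib, Complex.ofReal_prod]
  exact Finset.prod_congr rfl fun i _ => inv_two_pi_mul_gaussian_fourier_eq_heatKernel (hβ i) (y i)

theorem heatKernel_mul_heatKernel_mul_heatKernel {a D : ℝ} (ha : 0 < a) (hD : 0 < D)
    (y₀ y₁ y₂ : ℝ) :
    heatKernel a y₀ * heatKernel (a * D) y₁ * heatKernel a y₂
      = (4 * π * a) ^ (-(3 : ℝ) / 2) * D ^ (-(1 : ℝ) / 2)
          * Real.exp (-(1 / (4 * a)) * (y₀ ^ 2 + y₁ ^ 2 / D + y₂ ^ 2)) := by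
  have h4πa : 0 < 4 * π * a := by positivity
  have hexp : Real.exp (-(1 / (4 * a)) * (y₀ ^ 2 + y₁ ^ 2 / D + y₂ ^ 2))
      = Real.exp (-(y₀ ^ 2 / (4 * a))) * Real.exp (-(y₁ ^ 2 / (4 * (a * D))))
        * Real.exp (-(y₂ ^ 2 / (4 * a))) := by
    rw [← Real.exp_add, ← Real.exp_add]
    congr 1
    field_simp
    ring
  rw [heatKernel, heatKernel, heatKernel, hexp, show 4 * π * (a * D) = 4 * π * a * D by ring,
    mul_rpow h4πa.le hD.le, show -(3 : ℝ) / 2 = -1 / 2 + -1 / 2 + -1 / 2 by norm_num,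
    rpow_add h4πa, rpow_add h4πa]
  ring

theorem inv_two_pi_pow_three_mul_integral_cexp_sheared_quadratic {a b p D : ℝ} (ha : 0 < a)
    (hD : 1 + p - b ^ 2 / 4 = D) (hDpos : 0 < D) (x : Fin 3 → ℝ) :
    ((1 / (2 * π) ^ 3 : ℝ) : ℂ) *
        ∫ k : Fin 3 → ℝ, cexp (Complex.I * ((k 0 * x 0 + k 1 * x 1 + k 2 * x 2 : ℝ) : ℂ)
          - ((a * (k 0 ^ 2 + k 1 ^ 2 + k 2 ^ 2 - b * k 0 * k 1 + p * k 1 ^ 2) : ℝ) : ℂ))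
      = (((4 * π * a) ^ (-(3 : ℝ) / 2) * D ^ (-(1 : ℝ) / 2)
          * Real.exp (-(1 / (4 * a)) * (x 0 ^ 2 + (x 1 + b / 2 * x 0) ^ 2 / D + x 2 ^ 2)) : ℝ)
          : ℂ) := by
  have hβ : ∀ i, 0 < ![a, a * D, a] i := by
    intro i; fin_cases i <;> simp [ha, mul_pos ha hDpos]
  have hdiag := inv_two_pi_pow_mul_integral_cexp_neg_sum_mul_add hβ ![x 0, x 1 + b / 2 * x 0, x 2]
  simp only [Fin.sum_univ_three, Fin.prod_univ_three, Fintype.card_fin, Matrix.cons_val_zero,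
    Matrix.cons_val_one, Matrix.cons_val_two, Matrix.head_cons, Matrix.tail_cons,
    heatKernel_mul_heatKernel_mul_heatKernel ha hDpos] at hdiag
  rw [← integral_comp_transvectionStruct ⟨0, 1, by decide, b / 2⟩, ← hdiag]
  simp only [transvection_zero_one_mulVec, Matrix.cons_val_zero,
    Matrix.cons_val_one, Matrix.cons_val_two, Matrix.head_cons, Matrix.tail_cons]
  congr 1
  · push_cast
    rw [one_div, inv_pow]
  · congr 1 with u
    congr 1
    have hDc : (1 + p - b ^ 2 / 4 : ℂ) = D := by exact_mod_cast hD
    push_cast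
    linear_combination (-a * u 1 ^ 2 : ℂ) * hDc

theorem add_sqrt_one_add_sq_pos (f : ℝ) : 0 < f + √(1 + f ^ 2) := by
  have : |f| < √(1 + f ^ 2) := Real.lt_sqrt (abs_nonneg f) |>.2 (by rw [sq_abs]; linarith)
  linarith [neg_abs_le f]

theorem sin_sq_sub_cos_sq_of_tan_eq {θ f : ℝ} (hc : cos θ ≠ 0) (h : tan θ = f + √(1 + f ^ 2)) :
    sin θ ^ 2 - cos θ ^ 2 = 2 * f * sin θ * cos θ := by
  have hsq : (tan θ - f) ^ 2 = 1 + f ^ 2 := by rw [h, add_sub_cancel_left, sq_sqrt (by positivity)]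
  rw [tan_eq_sin_div_cos] at hsq
  field_simp at hsq
  linear_combination hsq

theorem sq_add_shear_sq_div_eq_rotated {b p D s c σ₁ σ₂ : ℝ} (hD : 1 + p - b ^ 2 / 4 = D)
    (hDne : D ≠ 0) (hsc : s ^ 2 + c ^ 2 = 1) (hs : s ≠ 0) (hc : c ≠ 0)
    (heig : b * (c ^ 2 - s ^ 2) = 2 * p * s * c)
    (hσ₁ : σ₁ = 1 - b / 2 * (s / c)) (hσ₂ : σ₂ = 1 + b / 2 * (c / s)) (x₀ x₁ : ℝ) :
    x₀ ^ 2 + (x₁ + b / 2 * x₀) ^ 2 / D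
      = (x₀ * c + x₁ * s) ^ 2 / σ₁ + (-x₀ * s + x₁ * c) ^ 2 / σ₂ := by
  have hσ₁c : σ₁ * c = c - b / 2 * s := by rw [hσ₁]; field_simp
  have hσ₂s : σ₂ * s = s + b / 2 * c := by rw [hσ₂]; field_simp
  have hsc0 : s * c ≠ 0 := mul_ne_zero hs hc
  have hdet : σ₁ * σ₂ = D := mul_right_cancel₀ hsc0 <| by
    linear_combination (σ₂ * s) * hσ₁c + (c - b / 2 * s) * hσ₂s + (1 / 2) * heig + (s * c) * hD
  have hσ₁ne : σ₁ ≠ 0 := left_ne_zero_of_mul (hdet ▸ hDne)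
  have hσ₂ne : σ₂ ≠ 0 := right_ne_zero_of_mul (hdet ▸ hDne)
  have e₁ : σ₁ * c ^ 2 + σ₂ * s ^ 2 = 1 := by linear_combination c * hσ₁c + s * hσ₂s + hsc
  have e₂ : (σ₂ - σ₁) * s * c = b / 2 := by linear_combination c * hσ₂s - s * hσ₁c + (b / 2) * hsc
  have e₃ : σ₂ * c ^ 2 + σ₁ * s ^ 2 = 1 + p := mul_right_cancel₀ hsc0 <| by
    linear_combination c ^ 3 * hσ₂s + s ^ 3 * hσ₁c + (1 / 2) * heig
      + (s * c + b / 2 * (c ^ 2 - s ^ 2)) * hsc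
  have hnum : D * x₀ ^ 2 + (x₁ + b / 2 * x₀) ^ 2
      = σ₂ * (x₀ * c + x₁ * s) ^ 2 + σ₁ * (-x₀ * s + x₁ * c) ^ 2 := by
    linear_combination -x₀ ^ 2 * hD - x₀ ^ 2 * e₃ - x₁ ^ 2 * e₁ - 2 * x₀ * x₁ * e₂
  rw [← hdet] at hnum ⊢
  field_simp
  linear_combination 4 * hnum

theorem inverse_fourier_transform_of_greens_function_is_sheared_heat_kernel_general
    (η S t t' : ℝ) (hη : 0 < η) (ht' : 0 ≤ t') (ht : t' < t)
    (f θ : ℝ) (hf : f = -(S / 3) * (t ^ 2 + t * t' + t' ^ 2) / (t + t'))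
    (htan : Real.tan θ = f + Real.sqrt (1 + f ^ 2))
    (σ1sq σ2sq : ℝ)
    (hσ1 : σ1sq = 1 - S / 2 * (t + t') * Real.tan θ)
    (hσ2 : σ2sq = 1 + S / 2 * (t + t') * (Real.cos θ / Real.sin θ)) :
    ∀ x : Fin 3 → ℝ,
      ((1 / (2 * Real.pi) ^ 3 : ℝ) : ℂ) *
        ∫ k : Fin 3 → ℝ,
          Complex.exp (Complex.I * ((k 0 * x 0 + k 1 * x 1 + k 2 * x 2 : ℝ) : ℂ)
            - ((η * (t - t') * ((k 0) ^ 2 + (k 1) ^ 2 + (k 2) ^ 2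
                - S * (t + t') * (k 0) * (k 1)
                + S ^ 2 / 3 * (t ^ 2 + t * t' + t' ^ 2) * (k 1) ^ 2) : ℝ) : ℂ))
      = (((4 * Real.pi * η * (t - t')) ^ (-(3 : ℝ) / 2)
          * (1 + S ^ 2 / 12 * (t - t') ^ 2) ^ (-(1 : ℝ) / 2)
          * Real.exp (-(1 / (4 * η * (t - t')))
              * ((x 0 * Real.cos θ + x 1 * Real.sin θ) ^ 2 / σ1sq
                + (-(x 0) * Real.sin θ + x 1 * Real.cos θ) ^ 2 / σ2sq
                + (x 2) ^ 2)) : ℝ) : ℂ) := by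
  intro x
  have htp : 0 < t + t' := by linarith
  have hD : 1 + S ^ 2 / 3 * (t ^ 2 + t * t' + t' ^ 2) - (S * (t + t')) ^ 2 / 4
      = 1 + S ^ 2 / 12 * (t - t') ^ 2 := by ring
  have hDpos : 0 < 1 + S ^ 2 / 12 * (t - t') ^ 2 := by positivity
  obtain ⟨hs, hc⟩ : sin θ ≠ 0 ∧ cos θ ≠ 0 := by
    rw [← div_ne_zero_iff, ← tan_eq_sin_div_cos, htan]
    exact (add_sqrt_one_add_sq_pos f).ne'
  have heig : S * (t + t') * (cos θ ^ 2 - sin θ ^ 2)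
      = 2 * (S ^ 2 / 3 * (t ^ 2 + t * t' + t' ^ 2)) * sin θ * cos θ := by
    have hbf : S * (t + t') * f = -(S ^ 2 / 3 * (t ^ 2 + t * t' + t' ^ 2)) := by
      rw [hf]; field_simp
    linear_combination -(S * (t + t')) * sin_sq_sub_cos_sq_of_tan_eq hc htan
      - 2 * sin θ * cos θ * hbf
  rw [inv_two_pi_pow_three_mul_integral_cexp_sheared_quadratic (mul_pos hη (sub_pos.2 ht))
      hD hDpos x,
    sq_add_shear_sq_div_eq_rotated (σ₁ := σ1sq) (σ₂ := σ2sq) hD hDpos.ne' (sin_sq_add_cos_sq θ)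
      hs hc heig (by rw [hσ1, tan_eq_sin_div_cos]; ring) (by rw [hσ2]; ring),
    show 4 * π * η * (t - t') = 4 * π * (η * (t - t')) by ring,
    show 4 * η * (t - t') = 4 * (η * (t - t')) by ring]

theorem inverse_fourier_transform_of_greens_function_is_sheared_heat_kernel
    (η S t t' : ℝ) (hη : 0 < η) (ht' : 0 ≤ t') (ht : t' < t)
    (f θ : ℝ) (hf : f = -(S / 3) * (t ^ 2 + t * t' + t' ^ 2) / (t + t'))
    (hθ0 : 0 < θ) (hθπ : θ < Real.pi / 2)
    (htan : Real.tan θ = f + Real.sqrt (1 + f ^ 2))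
    (σ1sq σ2sq : ℝ)
    (hσ1 : σ1sq = 1 - S / 2 * (t + t') * Real.tan θ)
    (hσ2 : σ2sq = 1 + S / 2 * (t + t') * (Real.cos θ / Real.sin θ)) :
    ∀ x : Fin 3 → ℝ,
      ((1 / (2 * Real.pi) ^ 3 : ℝ) : ℂ) *
        ∫ k : Fin 3 → ℝ,
          Complex.exp (Complex.I * ((k 0 * x 0 + k 1 * x 1 + k 2 * x 2 : ℝ) : ℂ)
            - ((η * (t - t') * ((k 0) ^ 2 + (k 1) ^ 2 + (k 2) ^ 2
                - S * (t + t') * (k 0) * (k 1)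
                + S ^ 2 / 3 * (t ^ 2 + t * t' + t' ^ 2) * (k 1) ^ 2) : ℝ) : ℂ))
      = (((4 * Real.pi * η * (t - t')) ^ (-(3 : ℝ) / 2)
          * (1 + S ^ 2 / 12 * (t - t') ^ 2) ^ (-(1 : ℝ) / 2)
          * Real.exp (-(1 / (4 * η * (t - t')))
              * ((x 0 * Real.cos θ + x 1 * Real.sin θ) ^ 2 / σ1sq
                + (-(x 0) * Real.sin θ + x 1 * Real.cos θ) ^ 2 / σ2sq
                + (x 2) ^ 2)) : ℝ) : ℂ) :=
  inverse_fourier_transform_of_greens_function_is_sheared_heat_kernel_general η S t t' hη ht' ht f θ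
    hf htan σ1sq σ2sq hσ1 hσ2
end

section
/- Fix η > 0, S ∈ ℝ, and times t > t' ≥ 0. Then the sheared heat kernel is normalized: ∫_{ℝ³} G_η(x,t,t') d³x = 1. -/
/-!
In the coordinates `x = R_θ · diag(σ₁, σ₂, 1) · y` the exponent becomes `|y|² / (4η(t - t'))`,
so the integral is `σ₁ σ₂ (4πη(t - t'))^{3/2}` times the prefactor. The angle `θ` is chosen so
that `tan θ` and `cot θ` are the two roots `f ± √(1 + f²)`; this makes
`σ₁² σ₂² = 1 + S²(t - t')²/12` and forces both `σᵢ²` to be positive.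
-/

open MeasureTheory Real Matrix

theorem integral_comp_linearMap {E F : Type*} [NormedAddCommGroup E] [NormedSpace ℝ E]
    [MeasurableSpace E] [BorelSpace E] [FiniteDimensional ℝ E] [NormedAddCommGroup F]
    [NormedSpace ℝ F] (μ : Measure E) [μ.IsAddHaarMeasure] {L : E →ₗ[ℝ] E}
    (hL : LinearMap.det L ≠ 0) (g : E → F) :
    ∫ x, g (L x) ∂μ = |LinearMap.det L|⁻¹ • ∫ y, g y ∂μ := by
  let e : E ≃ᵐ E := (LinearMap.equivOfDetNeZero L hL).toContinuousLinearEquiv.toHomeomorph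
    |>.toMeasurableEquiv
  have he : (e : E → E) = L := rfl
  rw [← he, ← integral_map_equiv e g, he, Measure.map_linearMap_addHaar_eq_smul_addHaar μ hL,
    integral_smul_measure, ENNReal.toReal_ofReal (abs_nonneg _), abs_inv]

noncomputable def rotScale (θ p q : ℝ) : Matrix (Fin 3) (Fin 3) ℝ :=
  !![cos θ * p, -(sin θ * q), 0;
     sin θ * p, cos θ * q, 0;
     0, 0, 1]

theorem det_rotScale (θ p q : ℝ) : (rotScale θ p q).det = p * q := by
  rw [rotScale, det_fin_three]
  simp only [of_apply, cons_val', cons_val_zero, cons_val_fin_one, cons_val_one, cons_val,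
    mul_one, mul_zero, sub_zero, neg_mul, sub_neg_eq_add, add_zero, zero_mul]
  linear_combination p * q * sin_sq_add_cos_sq θ

theorem rotated_quadratic_rotScale_mulVec (θ : ℝ) {p q : ℝ} (hp : p ≠ 0) (hq : q ≠ 0)
    (x : Fin 3 → ℝ) :
    let y := rotScale θ p q *ᵥ x
    (y 0 * cos θ + y 1 * sin θ) ^ 2 / p ^ 2 + (-(y 0) * sin θ + y 1 * cos θ) ^ 2 / q ^ 2
      + y 2 ^ 2 = ∑ i, x i ^ 2 := by
  have y0 : (rotScale θ p q *ᵥ x) 0 = cos θ * p * x 0 - sin θ * q * x 1 := by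
    simp [rotScale, vecHead, vecTail, sub_eq_add_neg]
  have y1 : (rotScale θ p q *ᵥ x) 1 = sin θ * p * x 0 + cos θ * q * x 1 := by
    simp [rotScale, vecHead, vecTail]
  have y2 : (rotScale θ p q *ᵥ x) 2 = x 2 := by
    simp [rotScale, vecHead, vecTail]
  have e0 : (cos θ * p * x 0 - sin θ * q * x 1) * cos θ
      + (sin θ * p * x 0 + cos θ * q * x 1) * sin θ = p * x 0 := by
    linear_combination p * x 0 * sin_sq_add_cos_sq θ
  have e1 : -(cos θ * p * x 0 - sin θ * q * x 1) * sin θ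
      + (sin θ * p * x 0 + cos θ * q * x 1) * cos θ = q * x 1 := by
    linear_combination q * x 1 * sin_sq_add_cos_sq θ
  simp only [y0, y1, y2, e0, e1, Fin.sum_univ_three]
  field_simp

theorem integral_exp_neg_mul_rotated_quadratic (k θ : ℝ) {a b : ℝ} (ha : 0 < a) (hb : 0 < b) :
    ∫ x : Fin 3 → ℝ, exp (-k * ((x 0 * cos θ + x 1 * sin θ) ^ 2 / a
        + (-(x 0) * sin θ + x 1 * cos θ) ^ 2 / b + x 2 ^ 2)) = √(a * b) * √(π / k) ^ 3 := by
  obtain ⟨p, hp, rfl⟩ : ∃ p, 0 < p ∧ p ^ 2 = a := ⟨√a, sqrt_pos.2 ha, sq_sqrt ha.le⟩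
  obtain ⟨q, hq, rfl⟩ : ∃ q, 0 < q ∧ q ^ 2 = b := ⟨√b, sqrt_pos.2 hb, sq_sqrt hb.le⟩
  have hdet : LinearMap.det (toLin' (rotScale θ p q)) = p * q := by
    rw [LinearMap.det_toLin', det_rotScale]
  have hchange := integral_comp_linearMap volume (hdet ▸ (mul_pos hp hq).ne')
    (fun x : Fin 3 → ℝ => exp (-k * ((x 0 * cos θ + x 1 * sin θ) ^ 2 / p ^ 2
        + (-(x 0) * sin θ + x 1 * cos θ) ^ 2 / q ^ 2 + x 2 ^ 2)))
  simp only [toLin'_apply, rotated_quadratic_rotScale_mulVec θ hp.ne' hq.ne', Finset.mul_sum,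
    exp_sum, hdet] at hchange
  rw [integral_fintype_prod_volume_eq_pow (fun v => exp (-k * v ^ 2)), integral_gaussian,
    Fintype.card_fin, abs_of_pos (by positivity), eq_inv_smul_iff₀ (by positivity)] at hchange
  rw [← mul_pow, sqrt_sq (by positivity), ← hchange, smul_eq_mul]

theorem cos_div_sin_eq_of_tan_eq {θ f r : ℝ} (hr : r ^ 2 = 1 + f ^ 2)
    (htan : tan θ = f + r) : cos θ / sin θ = r - f := by
  rw [← inv_div, ← tan_eq_sin_div_cos, htan]
  exact inv_eq_of_mul_eq_one_right (by linear_combination hr)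

/-- The second factor times `f + r` is `f + u + r`, and `r > |f + u|` because
`r ^ 2 - (f + u) ^ 2` equals the product. -/
theorem pos_of_mul_pos_of_sq_eq {f r u : ℝ} (hr : r ^ 2 = 1 + f ^ 2) (hr0 : 0 ≤ r)
    (h : 0 < (1 - u * (f + r)) * (1 + u * (r - f))) :
    0 < 1 - u * (f + r) ∧ 0 < 1 + u * (r - f) := by
  have hfr : 0 < f + r := (abs_lt_of_sq_lt_sq' (by linarith) hr0).1 |> neg_lt_iff_pos_add.1
  have hfur : 0 < f + u + r := by
    refine (abs_lt_of_sq_lt_sq' ?_ hr0).1 |> neg_lt_iff_pos_add.1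
    linear_combination h - (1 + u ^ 2) * hr
  have hσ2 : 0 < 1 + u * (r - f) :=
    pos_of_mul_pos_right (a := f + r) (by linear_combination hfur - u * hr) hfr.le
  exact ⟨pos_of_mul_pos_left h hσ2.le, hσ2⟩

theorem shear_variance_mul {S t t' f r : ℝ} (hτ : t + t' ≠ 0)
    (hf : f = -(S / 3) * (t ^ 2 + t * t' + t' ^ 2) / (t + t')) (hr : r ^ 2 = 1 + f ^ 2) :
    (1 - S / 2 * (t + t') * (f + r)) * (1 + S / 2 * (t + t') * (r - f))
      = 1 + S ^ 2 / 12 * (t - t') ^ 2 := by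
  have hfτ : f * (t + t') = -(S / 3) * (t ^ 2 + t * t' + t' ^ 2) := by
    rw [hf]; field_simp
  linear_combination (-(S / 2 * (t + t')) ^ 2) * hr - S * hfτ

theorem rpow_neg_div_two_eq_inv_sqrt_pow {x : ℝ} (hx : 0 ≤ x) (n : ℕ) :
    x ^ (-(n : ℝ) / 2) = (√x ^ n)⁻¹ := by
  rw [neg_div, rpow_neg hx, sqrt_eq_rpow, ← rpow_natCast, ← rpow_mul hx, one_div_mul_eq_div]

theorem sheared_heat_kernel_normalized_general
    (η S t t' : ℝ) (hη : 0 < η) (ht' : 0 ≤ t') (ht : t' < t)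
    (f θ : ℝ) (hf : f = -(S / 3) * (t ^ 2 + t * t' + t' ^ 2) / (t + t'))
    (htan : Real.tan θ = f + Real.sqrt (1 + f ^ 2))
    (σ1sq σ2sq : ℝ)
    (hσ1 : σ1sq = 1 - S / 2 * (t + t') * Real.tan θ)
    (hσ2 : σ2sq = 1 + S / 2 * (t + t') * (Real.cos θ / Real.sin θ)) :
    ∫ x : Fin 3 → ℝ,
      (4 * Real.pi * η * (t - t')) ^ (-(3 : ℝ) / 2)
        * (1 + S ^ 2 / 12 * (t - t') ^ 2) ^ (-(1 : ℝ) / 2)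
        * Real.exp (-(1 / (4 * η * (t - t')))
            * ((x 0 * Real.cos θ + x 1 * Real.sin θ) ^ 2 / σ1sq
              + (-(x 0) * Real.sin θ + x 1 * Real.cos θ) ^ 2 / σ2sq
              + (x 2) ^ 2))
      = 1 := by
  have hr : √(1 + f ^ 2) ^ 2 = 1 + f ^ 2 := sq_sqrt (by positivity)
  rw [cos_div_sin_eq_of_tan_eq hr htan] at hσ2
  rw [htan] at hσ1
  have hprod : σ1sq * σ2sq = 1 + S ^ 2 / 12 * (t - t') ^ 2 := by
    rw [hσ1, hσ2]; exact shear_variance_mul (by linarith : 0 < t + t').ne' hf hr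
  obtain ⟨hσ1pos, hσ2pos⟩ : 0 < σ1sq ∧ 0 < σ2sq := by
    have hpos : 0 < σ1sq * σ2sq := hprod ▸ by positivity
    rw [hσ1, hσ2] at hpos ⊢
    exact pos_of_mul_pos_of_sq_eq hr (sqrt_nonneg _) hpos
  have hX : 0 < 4 * π * η * (t - t') := by have := sub_pos.2 ht; positivity
  have hY : 0 < 1 + S ^ 2 / 12 * (t - t') ^ 2 := by positivity
  have hπX : π / (1 / (4 * η * (t - t'))) = 4 * π * η * (t - t') := by
    rw [div_div_eq_mul_div, div_one]; ring
  have h3 := rpow_neg_div_two_eq_inv_sqrt_pow hX.le 3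
  have h1 := rpow_neg_div_two_eq_inv_sqrt_pow hY.le 1
  rw [Nat.cast_ofNat] at h3
  rw [Nat.cast_one, pow_one] at h1
  rw [integral_const_mul, integral_exp_neg_mul_rotated_quadratic _ _ hσ1pos hσ2pos, hprod, hπX,
    h3, h1]
  field_simp

theorem sheared_heat_kernel_normalized
    (η S t t' : ℝ) (hη : 0 < η) (ht' : 0 ≤ t') (ht : t' < t)
    (f θ : ℝ) (hf : f = -(S / 3) * (t ^ 2 + t * t' + t' ^ 2) / (t + t'))
    (hθ0 : 0 < θ) (hθπ : θ < Real.pi / 2)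
    (htan : Real.tan θ = f + Real.sqrt (1 + f ^ 2))
    (σ1sq σ2sq : ℝ)
    (hσ1 : σ1sq = 1 - S / 2 * (t + t') * Real.tan θ)
    (hσ2 : σ2sq = 1 + S / 2 * (t + t') * (Real.cos θ / Real.sin θ)) :
    ∫ x : Fin 3 → ℝ,
      (4 * Real.pi * η * (t - t')) ^ (-(3 : ℝ) / 2)
        * (1 + S ^ 2 / 12 * (t - t') ^ 2) ^ (-(1 : ℝ) / 2)
        * Real.exp (-(1 / (4 * η * (t - t')))
            * ((x 0 * Real.cos θ + x 1 * Real.sin θ) ^ 2 / σ1sq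
              + (-(x 0) * Real.sin θ + x 1 * Real.cos θ) ^ 2 / σ2sq
              + (x 2) ^ 2))
      = 1 :=
  sheared_heat_kernel_normalized_general η S t t' hη ht' ht f θ hf htan σ1sq σ2sq hσ1 hσ2
end
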